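/- arXiv:2005.02716 — 2 statements merged into one kernel-verified Lean document; each statement's English description precedes it below -/
import Mathlib

section
/- Let G be a finite simple graph, let x be a vertex, let P be an x-fiber of G, let H be a connected component of G − V(P), and let k be the number of attachment points of H on P. Then there exists an independent set A of G with A ⊆ V(P) − {x}, |A| ≥ k, such that no edge of G joins a vertex of A and a vertex of H. -/
open SimpleGraph

/-- `p` is an `x`-fiber of `G`: a longest path among all paths having `x` as an
endpoint. -/
def IsXFiber {V : Type} (G : SimpleGraph V) {x y : V} (p : G.Walk x y) : Prop :=
  p.IsPath ∧ ∀ (z : V) (q : G.Walk x z), q.IsPath → q.length ≤ p.length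

/-- The attachment points on `p` of the component `C` of `G - V(p)`: the vertices of
`p` having a neighbor in `C`. -/
def attachPoints {V : Type} (G : SimpleGraph V) {x y : V} (p : G.Walk x y)
    (C : (G.induce {v : V | v ∉ p.support}).ConnectedComponent) : Set V :=
  {s : V | s ∈ p.support ∧ ∃ h : {v : V | v ∉ p.support},
    (G.induce {v : V | v ∉ p.support}).connectedComponentMk h = C ∧ G.Adj ↑h s}

/-!
Take for `A` the successors `s⁺` along `P` of the attachment points `s` of `H`, i.e. the second
endpoints of the darts of `P` leaving attachment points. No attachment point is the end `y` of
`P`, since `P` could otherwise be prolonged into `H`; as successors along a path are distinct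
and differ from `x`, this gives `|A| = k` and `x ∉ A`. Each forbidden edge would yield a path
from `x` longer than `P`, making a detour through a path `Q` in `H`:
* an edge `s⁺h` with `h ∈ H`: `x →P s → Q → h → s⁺ →P y`;
* an edge `s⁺t⁺` with `s` before `t` on `P`: `x →P s → Q → t →P⁻¹ s⁺ → t⁺ →P y`.
Each of these walks visits exactly the vertices of `Q` and of `P`, so it is a path, and it is
longer than `P`.
-/

namespace SimpleGraph.Walk

variable {V : Type} {G : SimpleGraph V}

theorem exists_eq_append_cons_of_mem_darts {u v : V} {d : G.Dart} :
    ∀ {p : G.Walk u v}, d ∈ p.darts →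
      ∃ (T : G.Walk u d.fst) (D : G.Walk d.snd v), p = T.append (cons d.adj D)
  | .nil, h => by cases h
  | .cons h q, hd => by
    rcases List.mem_cons.mp hd with rfl | hd
    · exact ⟨nil, q, rfl⟩
    · obtain ⟨T, D, rfl⟩ := exists_eq_append_cons_of_mem_darts hd
      exact ⟨cons h T, D, rfl⟩

theorem exists_eq_append_cons_append_cons_of_mem_darts {u v : V} {p : G.Walk u v}
    {d₁ d₂ : G.Dart} (h₁ : d₁ ∈ p.darts) (h₂ : d₂ ∈ p.darts) (hne : d₁ ≠ d₂) :
    (∃ (T : G.Walk u d₁.fst) (M : G.Walk d₁.snd d₂.fst) (D : G.Walk d₂.snd v),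
      p = T.append (cons d₁.adj (M.append (cons d₂.adj D)))) ∨
    (∃ (T : G.Walk u d₂.fst) (M : G.Walk d₂.snd d₁.fst) (D : G.Walk d₁.snd v),
      p = T.append (cons d₂.adj (M.append (cons d₁.adj D)))) := by
  obtain ⟨T, D, rfl⟩ := exists_eq_append_cons_of_mem_darts h₁
  rw [darts_append, darts_cons, List.mem_append, List.mem_cons] at h₂
  rcases h₂ with h₂ | rfl | h₂
  · obtain ⟨T', M, rfl⟩ := exists_eq_append_cons_of_mem_darts h₂
    exact .inr ⟨T', M, D, by rw [← append_assoc, cons_append]⟩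
  · exact absurd rfl hne
  · obtain ⟨M, D', rfl⟩ := exists_eq_append_cons_of_mem_darts h₂
    exact .inl ⟨T, M, D', rfl⟩

theorem exists_mem_darts_fst_eq {u v w : V} {p : G.Walk u v} (hw : w ∈ p.support)
    (hwv : w ≠ v) : ∃ d ∈ p.darts, d.fst = w := by
  have : w ∈ p.darts.map (·.fst) := by
    rw [map_fst_darts]
    exact List.mem_dropLast_of_mem_of_ne_getLast hw (by rwa [getLast_support])
  simpa using this

theorem IsPath.dart_snd_ne_start {u v : V} {p : G.Walk u v} (hp : p.IsPath) {d : G.Dart}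
    (hd : d ∈ p.darts) : d.snd ≠ u := by
  have hnd := hp.support_nodup
  rw [← cons_tail_support, List.nodup_cons, ← map_snd_darts] at hnd
  rintro rfl
  exact hnd.1 (List.mem_map_of_mem hd)

theorem IsPath.injOn_dart_snd {u v : V} {p : G.Walk u v} (hp : p.IsPath) :
    Set.InjOn (·.snd : G.Dart → V) {d | d ∈ p.darts} := by
  have hnd := hp.support_nodup
  rw [← cons_tail_support, List.nodup_cons, ← map_snd_darts] at hnd
  exact List.inj_on_of_nodup_map hnd.2

theorem exists_isPath_of_induce_connectedComponentMk_eq {s : Set V}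
    {C : (G.induce s).ConnectedComponent} {u v : s}
    (hu : (G.induce s).connectedComponentMk u = C)
    (hv : (G.induce s).connectedComponentMk v = C) :
    ∃ Q : G.Walk u v, Q.IsPath ∧ ∀ w ∈ Q.support, w ∈ s := by
  classical
  obtain ⟨q⟩ := ConnectedComponent.exact (hu.trans hv.symm)
  let f := (Embedding.induce (G := G) s).toHom
  have hsupp : ∀ w ∈ (q.toPath.val.map f).support, w ∈ s := by
    intro w hw
    rw [support_map, List.mem_map] at hw
    obtain ⟨w, -, rfl⟩ := hw
    exact w.2
  exact ⟨_, q.toPath.2.map (Embedding.induce (G := G) s).injective, hsupp⟩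

end SimpleGraph.Walk

open SimpleGraph.Walk

section Detours

variable {V : Type} {G : SimpleGraph V} {x y : V} {p : G.Walk x y}

theorem IsXFiber.not_perm_support_append (hp : IsXFiber G p) {a b z : V} {Q : G.Walk a b}
    (hQ : Q.IsPath) (hQp : ∀ v ∈ Q.support, v ∉ p.support) (W : G.Walk x z) :
    ¬ W.support.Perm (Q.support ++ p.support) := by
  intro hperm
  have hW : W.IsPath := by
    rw [isPath_def, hperm.nodup_iff, List.nodup_append]
    exact ⟨hQ.support_nodup, hp.1.support_nodup, fun v hv w hw hvw => hQp v hv (hvw ▸ hw)⟩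
  have hlen := hperm.length_eq
  rw [List.length_append, length_support, length_support, length_support] at hlen
  have := hp.2 z W hW
  omega

theorem IsXFiber.not_adj_end_of_notMem_support (hp : IsXFiber G p) {v : V}
    (hv : v ∉ p.support) : ¬ G.Adj y v := fun hyv =>
  hp.not_perm_support_append (Q := (nil : G.Walk v v)) IsPath.nil (by simpa using hv)
    (p.concat hyv) (by simp)

theorem IsXFiber.not_adj_of_detour (hp : IsXFiber G p) {s s' a b : V} {T : G.Walk x s}
    {hss' : G.Adj s s'} {D : G.Walk s' y} (hT : p = T.append (cons hss' D)) {Q : G.Walk a b}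
    (hQ : Q.IsPath) (hQp : ∀ v ∈ Q.support, v ∉ p.support) (hsa : G.Adj s a) :
    ¬ G.Adj b s' := fun hbs' => by
  refine hp.not_perm_support_append hQ hQp (T.append (cons hsa (Q.append (cons hbs' D)))) ?_
  subst hT
  simp only [support_append, support_cons, List.tail_cons]
  exact List.perm_append_comm_assoc _ _ _

theorem IsXFiber.not_adj_of_detour_reverse (hp : IsXFiber G p) {s s' t t' a b : V}
    {T : G.Walk x s} {hss' : G.Adj s s'} {M : G.Walk s' t} {htt' : G.Adj t t'}
    {D : G.Walk t' y} (hT : p = T.append (cons hss' (M.append (cons htt' D))))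
    {Q : G.Walk a b} (hQ : Q.IsPath) (hQp : ∀ v ∈ Q.support, v ∉ p.support)
    (hsa : G.Adj s a) (hbt : G.Adj b t) : ¬ G.Adj s' t' := fun hs't' => by
  refine hp.not_perm_support_append hQ hQp
    (T.append (cons hsa (Q.append (cons hbt (M.reverse.append (cons hs't' D)))))) ?_
  subst hT
  simp only [support_append, support_cons, support_reverse, List.tail_cons]
  exact (List.perm_append_comm_assoc _ _ _).trans
    ((((List.reverse_perm _).append_right _).append_left _).append_left _)

end Detours

section Component

variable {V : Type} {G : SimpleGraph V} {x y : V} {p : G.Walk x y}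
  {C : (G.induce {v : V | v ∉ p.support}).ConnectedComponent}

theorem IsXFiber.exists_mem_darts_fst_eq_of_mem_attachPoints (hp : IsXFiber G p) {s : V}
    (hs : s ∈ attachPoints G p C) : ∃ d ∈ p.darts, d.fst = s := by
  obtain ⟨hsp, h, -, hadj⟩ := hs
  refine exists_mem_darts_fst_eq hsp ?_
  rintro rfl
  exact hp.not_adj_end_of_notMem_support h.2 hadj.symm

theorem IsXFiber.not_adj_snd_of_fst_mem_attachPoints (hp : IsXFiber G p) {d : G.Dart}
    (hd : d ∈ p.darts) (hs : d.fst ∈ attachPoints G p C) (h : {v : V | v ∉ p.support})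
    (hC : (G.induce {v : V | v ∉ p.support}).connectedComponentMk h = C) :
    ¬ G.Adj d.snd h := fun hadj => by
  obtain ⟨-, h', hC', hadj'⟩ := hs
  obtain ⟨Q, hQ, hQp⟩ := exists_isPath_of_induce_connectedComponentMk_eq hC' hC
  obtain ⟨T, D, hT⟩ := exists_eq_append_cons_of_mem_darts hd
  exact hp.not_adj_of_detour hT hQ hQp hadj'.symm hadj.symm

theorem IsXFiber.not_adj_snd_snd_of_fst_mem_attachPoints (hp : IsXFiber G p)
    {d₁ d₂ : G.Dart} (hd₁ : d₁ ∈ p.darts) (hd₂ : d₂ ∈ p.darts) (hne : d₁ ≠ d₂)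
    (hs₁ : d₁.fst ∈ attachPoints G p C) (hs₂ : d₂.fst ∈ attachPoints G p C) :
    ¬ G.Adj d₁.snd d₂.snd := by
  obtain ⟨-, h₁, hC₁, hadj₁⟩ := hs₁
  obtain ⟨-, h₂, hC₂, hadj₂⟩ := hs₂
  rcases exists_eq_append_cons_append_cons_of_mem_darts hd₁ hd₂ hne with
    ⟨T, M, D, hT⟩ | ⟨T, M, D, hT⟩
  · obtain ⟨Q, hQ, hQp⟩ := exists_isPath_of_induce_connectedComponentMk_eq hC₁ hC₂
    exact hp.not_adj_of_detour_reverse hT hQ hQp hadj₁.symm hadj₂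
  · obtain ⟨Q, hQ, hQp⟩ := exists_isPath_of_induce_connectedComponentMk_eq hC₂ hC₁
    exact fun hadj => hp.not_adj_of_detour_reverse hT hQ hQp hadj₂.symm hadj₁ hadj.symm

end Component

theorem indep_set_of_x_fiber_general
    {V : Type} (G : SimpleGraph V) {x y : V}
    (p : G.Walk x y) (hp : IsXFiber G p)
    (C : (G.induce {v : V | v ∉ p.support}).ConnectedComponent) :
    ∃ A : Finset V,
      (∀ a ∈ A, ∀ b ∈ A, a ≠ b → ¬ G.Adj a b) ∧
      (∀ a ∈ A, a ∈ p.support ∧ a ≠ x) ∧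
      (attachPoints G p C).ncard ≤ A.card ∧
      (∀ a ∈ A, ∀ h : {v : V | v ∉ p.support},
        (G.induce {v : V | v ∉ p.support}).connectedComponentMk h = C → ¬ G.Adj a ↑h) := by
  classical
  set S := p.darts.toFinset.filter (·.fst ∈ attachPoints G p C)
  have hS {d : G.Dart} : d ∈ S ↔ d ∈ p.darts ∧ d.fst ∈ attachPoints G p C := by simp [S]
  have hattach : attachPoints G p C ⊆ S.image (·.fst) := fun s hs => by
    obtain ⟨d, hd, rfl⟩ := hp.exists_mem_darts_fst_eq_of_mem_attachPoints hs
    exact Finset.mem_image_of_mem _ (hS.mpr ⟨hd, hs⟩)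
  refine ⟨S.image (·.snd), ?_, ?_, ?_, ?_⟩
  · simp only [Finset.mem_image, hS]
    rintro _ ⟨d₁, ⟨hd₁, hs₁⟩, rfl⟩ _ ⟨d₂, ⟨hd₂, hs₂⟩, rfl⟩ hne
    exact hp.not_adj_snd_snd_of_fst_mem_attachPoints hd₁ hd₂ (ne_of_apply_ne (·.snd) hne)
      hs₁ hs₂
  · simp only [Finset.mem_image, hS]
    rintro _ ⟨d, ⟨hd, -⟩, rfl⟩
    exact ⟨p.dart_snd_mem_support_of_mem_darts hd, hp.1.dart_snd_ne_start hd⟩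
  · calc (attachPoints G p C).ncard
        ≤ (S.image (·.fst)).card := by
          rw [← Set.ncard_coe_finset]; exact Set.ncard_le_ncard hattach (Finset.finite_toSet _)
      _ ≤ S.card := Finset.card_image_le
      _ = (S.image (·.snd)).card := (Finset.card_image_of_injOn fun d₁ h₁ d₂ h₂ =>
          hp.1.injOn_dart_snd (hS.mp h₁).1 (hS.mp h₂).1).symm
  · simp only [Finset.mem_image, hS]
    rintro _ ⟨d, ⟨hd, hs⟩, rfl⟩
    exact hp.not_adj_snd_of_fst_mem_attachPoints hd hs

/-- If `P` is an `x`-fiber in `G` and `H` is a component of `G - V(P)` with `k`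
attachment points, then there is an independent set `A ⊆ V(P) - {x}` with
`|A| ≥ k` and no edge between `A` and `H`. -/
theorem indep_set_of_x_fiber
    {V : Type} [Fintype V] (G : SimpleGraph V) {x y : V}
    (p : G.Walk x y) (hp : IsXFiber G p)
    (C : (G.induce {v : V | v ∉ p.support}).ConnectedComponent) :
    ∃ A : Finset V,
      (∀ a ∈ A, ∀ b ∈ A, a ≠ b → ¬ G.Adj a b) ∧
      (∀ a ∈ A, a ∈ p.support ∧ a ≠ x) ∧
      (attachPoints G p C).ncard ≤ A.card ∧
      (∀ a ∈ A, ∀ h : {v : V | v ∉ p.support},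
        (G.induce {v : V | v ∉ p.support}).connectedComponentMk h = C → ¬ G.Adj a ↑h) :=
  indep_set_of_x_fiber_general G p hp C
end

section
/- Let G be a finite simple graph, let x and y be vertices, let P be an xy-fiber of G, let H be a connected component of G − V(P), and let k be the number of attachment points of H on P. Then there exists an independent set A of G with A ⊆ V(P) − {x, y}, |A| ≥ k − 1, such that no edge of G joins a vertex of A and a vertex of H. -/
/-! Order the attachment points `s₁, …, s_k` of `H` by their position on `P` and let `A`
consist of the successors `s₁⁺, …, s_{k-1}⁺` on `P`. Every competing `xy`-path below has
vertex set `V(P) ∪ V(W)` for a path `W` through `H`, so it would be longer than `P`: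
if `sᵢ⁺` had a neighbour in `H`, take `x P sᵢ, W, sᵢ⁺ P y`; if `sᵢ⁺ ~ sⱼ⁺` with `i < j`,
take `x P sᵢ, W, sⱼ P⁻¹ sᵢ⁺, sⱼ⁺ P y`. By the first detour `sᵢ⁺ ≠ s_k`, so `sᵢ⁺` lies
strictly between `x` and `s_k` on `P` and is neither `x` nor `y`. -/

open SimpleGraph

/-- `p` is an `xy`-fiber of `G`: a longest path among all paths with endpoints `x`
and `y`. -/
def IsXYFiber {V : Type} (G : SimpleGraph V) {x y : V} (p : G.Walk x y) : Prop :=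
  p.IsPath ∧ ∀ (q : G.Walk x y), q.IsPath → q.length ≤ p.length

namespace SimpleGraph

variable {V : Type*} {G : SimpleGraph V}

lemma ConnectedComponent.exists_isPath_of_induce_eq {s : Set V} {a b : s}
    (h : (G.induce s).connectedComponentMk a = (G.induce s).connectedComponentMk b) :
    ∃ W : G.Walk a b, W.IsPath ∧ ∀ z ∈ W.support, z ∈ s := by
  classical
  obtain ⟨w⟩ := ConnectedComponent.exact h
  let f := (Embedding.induce (G := G) s).toHom
  have hW : ∀ z ∈ (w.toPath.val.map f).support, z ∈ s := by
    intro z hz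
    rw [Walk.support_map, List.mem_map] at hz
    obtain ⟨z, -, rfl⟩ := hz
    exact z.property
  exact ⟨_, w.toPath.property.map (Embedding.induce (G := G) s).injective, hW⟩

lemma Walk.exists_support_eq_take_drop {u v : V} (p : G.Walk u v) {i j : ℕ} (hij : i ≤ j)
    (hj : j ≤ p.length) :
    ∃ q : G.Walk (p.getVert i) (p.getVert j), q.support = (p.support.drop i).take (j - i + 1) :=
  ⟨((p.drop i).take (j - i)).copy rfl (by rw [drop_getVert]; congr 1; omega), by
    rw [support_copy, support_take, drop_support_eq_support_drop_min, min_eq_left (hij.trans hj)]⟩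

lemma Walk.IsPath.exists_support_append_nodup {x y : V} {p : G.Walk x y} (hp : p.IsPath)
    {a b : {v : V | v ∉ p.support}}
    (h : (G.induce {v : V | v ∉ p.support}).connectedComponentMk a =
      (G.induce {v : V | v ∉ p.support}).connectedComponentMk b) :
    ∃ W : G.Walk a b, (W.support ++ p.support).Nodup := by
  obtain ⟨W, hW, hWs⟩ := ConnectedComponent.exists_isPath_of_induce_eq h
  exact ⟨W, List.nodup_append.mpr ⟨hW.support_nodup, hp.support_nodup,
    fun z hz w hw hzw => hWs z hz (hzw ▸ hw)⟩⟩

end SimpleGraph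

section Fiber

variable {V : Type} {G : SimpleGraph V} {x y : V} {p : G.Walk x y}

open Walk

lemma IsXYFiber.not_support_perm_append (hp : IsXYFiber G p) (q : G.Walk x y) {l : List V}
    (hl : l ≠ []) (hnd : (l ++ p.support).Nodup) : ¬ q.support.Perm (l ++ p.support) := by
  intro hq
  have hle := hp.2 q (isPath_def _ |>.mpr (hq.nodup_iff.mpr hnd))
  have hlen := hq.length_eq
  simp only [List.length_append, length_support] at hlen
  have := List.length_pos_of_ne_nil hl
  omega

lemma IsXYFiber.getVert_succ_notMem_attachPoints (hp : IsXYFiber G p)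
    {C : (G.induce {v : V | v ∉ p.support}).ConnectedComponent} {i : ℕ} (hi : i < p.length)
    (hCi : p.getVert i ∈ attachPoints G p C) : p.getVert (i + 1) ∉ attachPoints G p C := by
  rintro ⟨-, b, hCb, hb⟩
  obtain ⟨-, a, hCa, ha⟩ := hCi
  obtain ⟨W, hW⟩ := hp.1.exists_support_append_nodup (hCa.trans hCb.symm)
  refine hp.not_support_perm_append
    ((p.take i).append (.cons ha.symm (W.append (.cons hb (p.drop (i + 1)))))) W.support_ne_nil hW ?_
  simp only [support_append, support_cons, List.tail_cons, support_take,
    drop_support_eq_support_drop_min, Nat.min_eq_left hi]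
  calc List.Perm _ (W.support ++ (p.support.take (i + 1) ++ p.support.drop (i + 1))) :=
        List.perm_append_comm_assoc ..
    _ = _ := by rw [List.take_append_drop]

lemma IsXYFiber.not_adj_getVert_succ (hp : IsXYFiber G p)
    {C : (G.induce {v : V | v ∉ p.support}).ConnectedComponent} {i j : ℕ} (hne : i ≠ j)
    (hi : i < p.length) (hj : j < p.length) (hCi : p.getVert i ∈ attachPoints G p C)
    (hCj : p.getVert j ∈ attachPoints G p C) : ¬ G.Adj (p.getVert (i + 1)) (p.getVert (j + 1)) := by
  wlog hij : i < j generalizing i j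
  · exact fun hs => this hne.symm hj hi hCj hCi (by omega) hs.symm
  intro hs
  obtain ⟨-, a, hCa, ha⟩ := hCi
  obtain ⟨-, b, hCb, hb⟩ := hCj
  obtain ⟨W, hW⟩ := hp.1.exists_support_append_nodup (hCa.trans hCb.symm)
  obtain ⟨M, hM⟩ := p.exists_support_eq_take_drop (i := i + 1) hij hj.le
  refine hp.not_support_perm_append ((p.take i).append (.cons ha.symm (W.append
    (.cons hb (M.reverse.append (.cons hs (p.drop (j + 1)))))))) W.support_ne_nil hW ?_
  simp only [support_append, support_cons, List.tail_cons, support_take, support_reverse,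
    drop_support_eq_support_drop_min, Nat.min_eq_left hj, hM]
  have hsplit : (p.support.drop (i + 1)).take (j - (i + 1) + 1) ++ p.support.drop (j + 1) =
      p.support.drop (i + 1) := by
    conv_rhs => rw [← List.take_append_drop (j - (i + 1) + 1) (p.support.drop (i + 1))]
    rw [List.drop_drop, show i + 1 + (j - (i + 1) + 1) = j + 1 by omega]
  calc List.Perm _ (W.support ++ (p.support.take (i + 1) ++ (_ ++ p.support.drop (j + 1)))) :=
        (List.perm_append_comm_assoc ..).trans
          ((((List.reverse_perm _).append_right _).append_left _).append_left _)
    _ = _ := by rw [hsplit, List.take_append_drop]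

open Classical in
noncomputable def attachIndices (p : G.Walk x y)
    (C : (G.induce {v : V | v ∉ p.support}).ConnectedComponent) : Finset ℕ :=
  (Finset.range (p.length + 1)).filter (p.getVert · ∈ attachPoints G p C)

lemma mem_attachIndices {C : (G.induce {v : V | v ∉ p.support}).ConnectedComponent} {i : ℕ} :
    i ∈ attachIndices p C ↔ i ≤ p.length ∧ p.getVert i ∈ attachPoints G p C := by
  simp [attachIndices]

lemma ncard_attachPoints_eq_card_attachIndices (hp : p.IsPath)
    (C : (G.induce {v : V | v ∉ p.support}).ConnectedComponent) :
    (attachPoints G p C).ncard = (attachIndices p C).card := by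
  classical
  have himage : attachPoints G p C = (attachIndices p C).image p.getVert := by
    ext s
    simp only [Finset.coe_image, Set.mem_image, Finset.mem_coe, mem_attachIndices]
    refine ⟨fun hs => ?_, ?_⟩
    · obtain ⟨i, rfl, hi⟩ := mem_support_iff_exists_getVert.mp hs.1
      exact ⟨i, ⟨hi, hs⟩, rfl⟩
    · rintro ⟨i, ⟨-, hi⟩, rfl⟩
      exact hi
  rw [himage, Set.ncard_coe_finset, Finset.card_image_of_injOn]
  intro i hi j hj
  exact hp.getVert_injOn (mem_attachIndices.mp hi).1 (mem_attachIndices.mp hj).1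

lemma IsXYFiber.succ_lt_length_of_mem_erase_max' (hp : IsXYFiber G p)
    {C : (G.induce {v : V | v ∉ p.support}).ConnectedComponent} (hI : (attachIndices p C).Nonempty)
    {i : ℕ} (hi : i ∈ (attachIndices p C).erase ((attachIndices p C).max' hI)) :
    i + 1 < p.length := by
  obtain ⟨hne, hiI⟩ := Finset.mem_erase.mp hi
  have hlt := lt_of_le_of_ne ((attachIndices p C).le_max' i hiI) hne
  have hmax := mem_attachIndices.mp ((attachIndices p C).max'_mem hI)
  have hsucc : i + 1 ≠ (attachIndices p C).max' hI := fun h =>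
    hp.getVert_succ_notMem_attachPoints (by omega) (mem_attachIndices.mp hiI).2 (h ▸ hmax.2)
  omega

end Fiber

theorem indep_set_of_xy_fiber_general
    {V : Type} (G : SimpleGraph V) {x y : V}
    (p : G.Walk x y) (hp : IsXYFiber G p)
    (C : (G.induce {v : V | v ∉ p.support}).ConnectedComponent) :
    ∃ A : Finset V,
      (∀ a ∈ A, ∀ b ∈ A, a ≠ b → ¬ G.Adj a b) ∧
      (∀ a ∈ A, a ∈ p.support ∧ a ≠ x ∧ a ≠ y) ∧
      (attachPoints G p C).ncard - 1 ≤ A.card ∧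
      (∀ a ∈ A, ∀ h : {v : V | v ∉ p.support},
        (G.induce {v : V | v ∉ p.support}).connectedComponentMk h = C → ¬ G.Adj a ↑h) := by
  classical
  rw [ncard_attachPoints_eq_card_attachIndices hp.1]
  obtain hI | hI := (attachIndices p C).eq_empty_or_nonempty
  · exact ⟨∅, by simp, by simp, by simp [hI], by simp⟩
  set J := (attachIndices p C).erase ((attachIndices p C).max' hI)
  have hJ (i : ℕ) (hi : i ∈ J) : i + 1 < p.length ∧ p.getVert i ∈ attachPoints G p C :=
    ⟨hp.succ_lt_length_of_mem_erase_max' hI hi,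
      (mem_attachIndices.mp (Finset.mem_of_mem_erase hi)).2⟩
  refine ⟨J.image (fun i => p.getVert (i + 1)), ?_, ?_, ?_, ?_⟩
  · simp only [Finset.mem_image]
    rintro _ ⟨i, hi, rfl⟩ _ ⟨j, hj, rfl⟩ hne
    exact hp.not_adj_getVert_succ (fun h => hne (h ▸ rfl)) (Nat.lt_of_succ_lt (hJ i hi).1)
      (Nat.lt_of_succ_lt (hJ j hj).1) (hJ i hi).2 (hJ j hj).2
  · simp only [Finset.mem_image]
    rintro _ ⟨i, hi, rfl⟩
    have hlt := (hJ i hi).1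
    exact ⟨p.getVert_mem_support _, (hp.1.getVert_eq_start_iff hlt.le).not.mpr (by omega),
      (hp.1.getVert_eq_end_iff hlt.le).not.mpr (by omega)⟩
  · rw [Finset.card_image_of_injOn, Finset.card_erase_of_mem ((attachIndices p C).max'_mem hI)]
    intro i hi j hj hij
    have := hp.1.getVert_injOn (hJ i hi).1.le (hJ j hj).1.le hij
    omega
  · simp only [Finset.mem_image]
    rintro _ ⟨i, hi, rfl⟩ h hC hadj
    exact hp.getVert_succ_notMem_attachPoints (Nat.lt_of_succ_lt (hJ i hi).1) (hJ i hi).2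
      ⟨p.getVert_mem_support _, h, hC, hadj.symm⟩

/-- If `P` is an `xy`-fiber in `G` and `H` is a component of `G - V(P)` with `k`
attachment points, then there is an independent set `A ⊆ V(P) - {x, y}` with
`|A| ≥ k - 1` and no edge between `A` and `H`. -/
theorem indep_set_of_xy_fiber
    {V : Type} [Fintype V] (G : SimpleGraph V) {x y : V}
    (p : G.Walk x y) (hp : IsXYFiber G p)
    (C : (G.induce {v : V | v ∉ p.support}).ConnectedComponent) :
    ∃ A : Finset V,
      (∀ a ∈ A, ∀ b ∈ A, a ≠ b → ¬ G.Adj a b) ∧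
      (∀ a ∈ A, a ∈ p.support ∧ a ≠ x ∧ a ≠ y) ∧
      (attachPoints G p C).ncard - 1 ≤ A.card ∧
      (∀ a ∈ A, ∀ h : {v : V | v ∉ p.support},
        (G.induce {v : V | v ∉ p.support}).connectedComponentMk h = C → ¬ G.Adj a ↑h) :=
  indep_set_of_xy_fiber_general G p hp C
end
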